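/- For all σ ∈ [0,1): ∫₀^π cos(θ₀)·sin²(θ₀)/(1+σ²-2σcos(θ₀))² dθ₀ = (π/2)·σ/(1-σ²). -/

import Mathlib

/-!
Partial fractions in `cos θ` give an elementary antiderivative of `2 σ³ (1 - σ²)` times the
integrand, consisting of `σ⁴ θ` plus an arctan term and a rational term that both vanish at `0` and
`π`; hence `2 σ³ (1 - σ²)` times the integral is `σ⁴ π`. Writing the arctan term as `arctan (σ sin θ / (1 - σ cos θ))`,
rather than through `tan (θ / 2)`, keeps it smooth on all of `ℝ` when `|σ| < 1`. The case `σ = 0` is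
`∫ cos θ sin² θ = [sin³ θ / 3] = 0`.
-/

open Real

lemma mul_cos_le_abs (σ θ : ℝ) : σ * cos θ ≤ |σ| :=
  (le_abs_self _).trans <| by
    rw [abs_mul]; exact mul_le_of_le_one_right (abs_nonneg σ) (abs_cos_le_one θ)

lemma hasDerivAt_one_add_sq_sub_two_mul_cos (σ θ : ℝ) :
    HasDerivAt (fun x => 1 + σ ^ 2 - 2 * σ * cos x) (2 * σ * sin θ) θ := by
  simpa using ((hasDerivAt_cos θ).const_mul (2 * σ)).const_sub (1 + σ ^ 2)

section

variable {σ : ℝ}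

lemma one_sub_mul_cos_pos (hσ : |σ| < 1) (θ : ℝ) : 0 < 1 - σ * cos θ := by
  linarith [mul_cos_le_abs σ θ]

lemma one_add_sq_sub_two_mul_cos_pos (hσ : |σ| < 1) (θ : ℝ) :
    0 < 1 + σ ^ 2 - 2 * σ * cos θ := by
  nlinarith [mul_cos_le_abs σ θ, sq_abs σ, mul_pos (sub_pos.2 hσ) (sub_pos.2 hσ)]

lemma hasDerivAt_arctan_mul_sin_div (hσ : |σ| < 1) (θ : ℝ) :
    HasDerivAt (fun x => arctan (σ * sin x / (1 - σ * cos x)))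
      ((σ * cos θ - σ ^ 2) / (1 + σ ^ 2 - 2 * σ * cos θ)) θ := by
  have hM := one_sub_mul_cos_pos hσ θ
  have hnorm : (1 - σ * cos θ) ^ 2 + (σ * sin θ) ^ 2 = 1 + σ ^ 2 - 2 * σ * cos θ := by
    linear_combination σ ^ 2 * sin_sq_add_cos_sq θ
  refine (((hasDerivAt_sin θ).const_mul σ).div
    (((hasDerivAt_cos θ).const_mul σ).const_sub 1) hM.ne').arctan.congr_deriv ?_
  simp only [Pi.div_apply]
  rw [← hnorm]
  field_simp
  linear_combination -σ ^ 2 * sin_sq_add_cos_sq θ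

lemma hasDerivAt_antideriv_cos_mul_sin_sq_div_sq (hσ : |σ| < 1) (θ : ℝ) :
    HasDerivAt (fun x => σ ^ 4 * x + (1 + σ ^ 4) * arctan (σ * sin x / (1 - σ * cos x)) +
        σ * (1 - σ ^ 2) * (sin x * (σ * cos x - 1 - σ ^ 2) / (1 + σ ^ 2 - 2 * σ * cos x)))
      (2 * σ ^ 3 * (1 - σ ^ 2) *
        (cos θ * sin θ ^ 2 / (1 + σ ^ 2 - 2 * σ * cos θ) ^ 2)) θ := by
  have hD := one_add_sq_sub_two_mul_cos_pos hσ θ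
  have hnum : HasDerivAt (fun x => sin x * (σ * cos x - 1 - σ ^ 2))
      (cos θ * (σ * cos θ - 1 - σ ^ 2) + sin θ * (σ * -sin θ)) θ :=
    (hasDerivAt_sin θ).mul ((((hasDerivAt_cos θ).const_mul σ).sub_const 1).sub_const _)
  refine ((((hasDerivAt_id θ).const_mul _).add
    ((hasDerivAt_arctan_mul_sin_div hσ θ).const_mul _)).add
    ((hnum.div (hasDerivAt_one_add_sq_sub_two_mul_cos σ θ) hD.ne').const_mul _)).congr_deriv ?_
  generalize hDg : 1 + σ ^ 2 - 2 * σ * cos θ = D at hD ⊢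
  field_simp
  rw [← hDg, sin_sq]
  ring

lemma mul_integral_cos_mul_sin_sq_div_sq (hσ : |σ| < 1) :
    2 * σ ^ 3 * (1 - σ ^ 2) *
        ∫ θ in (0:ℝ)..π, cos θ * sin θ ^ 2 / (1 + σ ^ 2 - 2 * σ * cos θ) ^ 2 = σ ^ 4 * π := by
  have hcont : Continuous fun θ => cos θ * sin θ ^ 2 / (1 + σ ^ 2 - 2 * σ * cos θ) ^ 2 :=
    by fun_prop (disch := exact fun θ => (pow_pos (one_add_sq_sub_two_mul_cos_pos hσ θ) 2).ne')
  rw [← intervalIntegral.integral_const_mul, intervalIntegral.integral_eq_sub_of_hasDerivAt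
    (fun θ _ => hasDerivAt_antideriv_cos_mul_sin_sq_div_sq hσ θ) ((hcont.const_mul _).intervalIntegrable _ _)]
  simp

end

lemma integral_cos_mul_sin_sq : ∫ θ in (0:ℝ)..π, cos θ * sin θ ^ 2 = 0 := by
  simpa [mul_comm] using integral_sin_pow_mul_cos_pow_odd (a := 0) (b := π) 2 0

theorem integral_cos_mul_sin_sq_div_sq {σ : ℝ} (hσ : |σ| < 1) :
    ∫ θ in (0:ℝ)..π, cos θ * sin θ ^ 2 / (1 + σ ^ 2 - 2 * σ * cos θ) ^ 2 =
      π / 2 * (σ / (1 - σ ^ 2)) := by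
  rcases eq_or_ne σ 0 with rfl | hσ0
  · simpa using integral_cos_mul_sin_sq
  have hσ2 : 1 - σ ^ 2 ≠ 0 := by nlinarith [sq_abs σ, abs_nonneg σ]
  have h := mul_integral_cos_mul_sin_sq_div_sq hσ
  generalize ∫ θ in (0:ℝ)..π, cos θ * sin θ ^ 2 / (1 + σ ^ 2 - 2 * σ * cos θ) ^ 2 = I at h ⊢
  field_simp
  apply mul_left_cancel₀ (pow_ne_zero 3 hσ0)
  linear_combination h

theorem integral_cos_sin_sq_over_kernel (σ : ℝ) (hσ : σ ∈ Set.Ico (0:ℝ) 1) :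
    ∫ θ₀ in (0:ℝ)..π,
        Real.cos θ₀ * Real.sin θ₀ ^ 2 / (1 + σ ^ 2 - 2 * σ * Real.cos θ₀) ^ 2 =
      (π / 2) * (σ / (1 - σ ^ 2)) :=
  integral_cos_mul_sin_sq_div_sq (abs_lt.2 ⟨by linarith [hσ.1], hσ.2⟩)
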